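/- arXiv:1604.05510 — 2 statements merged into one kernel-verified Lean document; each statement's English description precedes it below -/
import Mathlib

section
/- For all positive integers k and d there exists a constant C > 0 such that every rooted directed tree T with n vertices whose underlying undirected tree has maximum degree at most d admits a reversible pebbling using at most C · n^{1/k} pebbles and at most C · n steps. -/
/-- A system for pebbling: a finite directed tree given by a root and a parent
function (edges are directed from each non-root vertex to its parent, i.e.
toward the root). -/
structure PebSys (V : Type) where
  root : V
  parent : V → V

/-- `T` is a genuine rooted directed tree: the root is a fixed point of the
parent map and every vertex reaches the root by iterating the parent map. -/
def IsRDTree {V : Type} [Fintype V] (T : PebSys V) : Prop :=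
  T.parent T.root = T.root ∧ ∀ v : V, ∃ k : ℕ, T.parent^[k] v = T.root

/-- One legal move of the reversible pebble game, from configuration `P` to
configuration `Q`: exactly one vertex `v` is pebbled or unpebbled, and all
in-neighbours of `v` (vertices `u ≠ v` with `parent u = v`) carry pebbles
in `P`. -/
def PebStep {V : Type} [DecidableEq V] (T : PebSys V) (P Q : Finset V) : Prop :=
  ∃ v : V, ((v ∉ P ∧ Q = insert v P) ∨ (v ∉ Q ∧ P = insert v Q)) ∧
    ∀ u : V, u ≠ v → T.parent u = v → u ∈ P

/-- A persistent reversible pebbling: starts with no pebbles, ends with a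
pebble exactly on the root, consecutive configurations are legal moves. -/
def IsPebbling {V : Type} [DecidableEq V] (T : PebSys V) (L : List (Finset V)) : Prop :=
  L.head? = some ∅ ∧ L.getLast? = some {T.root} ∧ L.Chain' (PebStep T)

/-- A visiting reversible pebbling: starts and ends with no pebbles, and the
root carries a pebble at some point. -/
def IsVisPebbling {V : Type} [DecidableEq V] (T : PebSys V) (L : List (Finset V)) : Prop :=
  L.head? = some ∅ ∧ L.getLast? = some ∅ ∧ (∃ P ∈ L, T.root ∈ P) ∧ L.Chain' (PebStep T)

/-- The space of a pebbling: the maximum number of pebbles in any configuration. -/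
def pebSpace {V : Type} (L : List (Finset V)) : ℕ := (L.map Finset.card).foldr max 0

/-- The persistent reversible pebbling number `rev`. -/
noncomputable def revNum {V : Type} [DecidableEq V] (T : PebSys V) : ℕ :=
  sInf {k | ∃ L : List (Finset V), IsPebbling T L ∧ pebSpace L ≤ k}

/-- The visiting reversible pebbling number `vrev`. -/
noncomputable def vrevNum {V : Type} [DecidableEq V] (T : PebSys V) : ℕ :=
  sInf {k | ∃ L : List (Finset V), IsVisPebbling T L ∧ pebSpace L ≤ k}

/-- The underlying undirected graph of a rooted directed tree: `u` and `v` are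
adjacent iff one is the parent of the other. -/
def undirG {V : Type} (T : PebSys V) : SimpleGraph V :=
  SimpleGraph.fromRel (fun u v => T.parent u = v)

/-!
A branch `W` hanging from `r`, all of whose other in-neighbours are already pebbled, is pebbled
level by level. Level `0` peels off leaves: linear time and `|W|` pebbles. At level `j + 1`, a large
`W` is cut at a vertex `s` below which lie between `m ^ (j + 1)` and about `d * m ^ (j + 1)`
vertices: pebble `s` at level `j`, then `r` in the rest of `W` at level `j + 1` with `s` held as a
boundary pebble, and unpebble `s` by replaying the first stage backwards. Each level doubles the
time and adds `O(d m)` pebbles, while at most `|W| / m ^ j` separators are held at once at the top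
level. Taking `m = ⌈n ^ (1/k)⌉` and `k` levels gives `O(k d n ^ (1/k))` pebbles and `2 ^ k n` steps.
-/

theorem pebSpace_le {V : Type} {L : List (Finset V)} {s : ℕ} (h : ∀ R ∈ L, R.card ≤ s) :
    pebSpace L ≤ s :=
  List.max_le_of_forall_le _ _ (by simpa using h)

theorem Nat.div_pow_le_of_le_mul_pow_sub_one {a d m j : ℕ} (hm : 0 < m)
    (h : a ≤ d * (m ^ (j + 1) - 1) + 1) : a / m ^ j ≤ d * m + 1 := by
  apply Nat.div_le_of_le_mul
  have h₁ : d * (m ^ (j + 1) - 1) ≤ d * m ^ (j + 1) := Nat.mul_le_mul_left d (Nat.sub_le _ _)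
  have h₂ : 1 ≤ m ^ j := Nat.one_le_pow _ _ hm
  calc a ≤ d * m ^ (j + 1) + m ^ j := by omega
    _ = m ^ j * (d * m + 1) := by ring

theorem Nat.div_add_one_le_div_of_add_le {a b q : ℕ} (hq : 0 < q) (h : b + q ≤ a) :
    b / q + 1 ≤ a / q := by
  rw [← Nat.add_div_right b hq]
  exact Nat.div_le_div_right h

namespace PebSys

variable {V : Type} {T : PebSys V}

theorem eq_root_of_isPeriodicPt [Fintype V] (htree : IsRDTree T) {n : ℕ} {u : V} (hn : 0 < n)
    (h : Function.IsPeriodicPt T.parent n u) : u = T.root := by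
  obtain ⟨N, hN⟩ := htree.2 u
  calc u = T.parent^[n * N] u := (h.mul_const N).eq.symm
    _ = T.parent^[n * N - N] (T.parent^[N] u) := by
      rw [← Function.iterate_add_apply, Nat.sub_add_cancel (Nat.le_mul_of_pos_left N hn)]
    _ = T.root := by rw [hN, Function.iterate_fixed htree.1]

def Reaches (T : PebSys V) (u v : V) : Prop := ∃ j, T.parent^[j] u = v

namespace Reaches

variable {u v w : V}

theorem refl (u : V) : T.Reaches u u := ⟨0, rfl⟩

theorem trans (h₁ : T.Reaches u v) (h₂ : T.Reaches v w) : T.Reaches u w := by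
  obtain ⟨a, rfl⟩ := h₁
  obtain ⟨b, rfl⟩ := h₂
  exact ⟨b + a, Function.iterate_add_apply _ _ _ _⟩

theorem of_parent_eq (h : T.parent u = v) : T.Reaches u v := ⟨1, h⟩

theorem parent (h : T.Reaches u v) (huv : u ≠ v) : T.Reaches (T.parent u) v := by
  obtain ⟨_ | j, hj⟩ := h
  · exact absurd hj huv
  · exact ⟨j, hj⟩

theorem exists_child (h : T.Reaches u v) (huv : u ≠ v) :
    ∃ w, w ≠ v ∧ T.parent w = v ∧ T.Reaches u w := by
  obtain ⟨j, hj⟩ := h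
  induction j with
  | zero => exact absurd hj huv
  | succ j ih =>
    rw [Function.iterate_succ_apply'] at hj
    by_cases hw : T.parent^[j] u = v
    · exact ih hw
    · exact ⟨_, hw, hj, j, rfl⟩

theorem antisymm [Fintype V] (htree : IsRDTree T) (h₁ : T.Reaches u v) (h₂ : T.Reaches v u) :
    u = v := by
  obtain ⟨a, ha⟩ := h₁
  obtain ⟨b, hb⟩ := h₂
  have hper : Function.IsPeriodicPt T.parent (b + a) u := by
    rw [Function.IsPeriodicPt, Function.IsFixedPt, Function.iterate_add_apply, ha, hb]
  rcases Nat.eq_zero_or_pos (b + a) with h0 | hpos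
  · rwa [show a = 0 by omega] at ha
  · rw [eq_root_of_isPeriodicPt htree hpos hper] at ha ⊢
    rw [← ha, Function.iterate_fixed htree.1]

end Reaches

open Classical in
noncomputable def below (T : PebSys V) (W : Finset V) (s : V) : Finset V :=
  W.filter (T.Reaches · s)

@[simp]
theorem mem_below {W : Finset V} {s v : V} : v ∈ T.below W s ↔ v ∈ W ∧ T.Reaches v s := by
  classical
  simp [below]

theorem below_subset (W : Finset V) (s : V) : T.below W s ⊆ W :=
  fun _ hv => (mem_below.1 hv).1

structure IsBranch (T : PebSys V) (W : Finset V) (r : V) (P : Finset V) : Prop where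
  top_mem : r ∈ W
  parent_mem : ∀ v ∈ W, v ≠ r → T.parent v ∈ W
  reaches : ∀ v ∈ W, T.Reaches v r
  child_mem : ∀ v ∈ W, ∀ u, u ≠ v → T.parent u = v → u ∈ W ∨ u ∈ P
  disjoint : Disjoint W P

theorem IsBranch.below_top {W P : Finset V} {r : V} (hB : IsBranch T W r P) :
    T.below W r = W := by
  ext v
  exact ⟨fun h => (mem_below.1 h).1, fun hv => mem_below.2 ⟨hv, hB.reaches v hv⟩⟩

section Runs

variable [DecidableEq V]

theorem _root_.PebStep.symm {P Q : Finset V} (h : PebStep T P Q) : PebStep T Q P := by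
  obtain ⟨v, hv, hin⟩ := h
  refine ⟨v, hv.symm, fun u hu hp => ?_⟩
  rcases hv with ⟨-, rfl⟩ | ⟨-, rfl⟩
  · exact Finset.mem_insert_of_mem (hin u hu hp)
  · exact (Finset.mem_insert.1 (hin u hu hp)).resolve_left hu

theorem _root_.PebStep.insert {P Q : Finset V} {r : V} (h : PebStep T P Q) (hP : r ∉ P)
    (hQ : r ∉ Q) : PebStep T (insert r P) (insert r Q) := by
  obtain ⟨v, hv, hin⟩ := h
  refine ⟨v, ?_, fun u hu hp => Finset.mem_insert_of_mem (hin u hu hp)⟩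
  rcases hv with ⟨hvP, rfl⟩ | ⟨hvQ, rfl⟩
  · have hvr : v ≠ r := by rintro rfl; exact hQ (Finset.mem_insert_self _ _)
    exact Or.inl ⟨by simp [hvr, hvP], Finset.insert_comm _ _ _⟩
  · have hvr : v ≠ r := by rintro rfl; exact hP (Finset.mem_insert_self _ _)
    exact Or.inr ⟨by simp [hvr, hvQ], Finset.insert_comm _ _ _⟩

def IsRun (T : PebSys V) (A B : Finset V) (L : List (Finset V)) : Prop :=
  L.head? = some A ∧ L.getLast? = some B ∧ L.IsChain (PebStep T)

namespace IsRun

variable {A B C : Finset V} {L L₁ L₂ : List (Finset V)}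

theorem ne_nil (h : IsRun T A B L) : L ≠ [] := by
  rintro rfl; simp [IsRun] at h

theorem pair (h : PebStep T A B) : IsRun T A B [A, B] :=
  ⟨rfl, rfl, List.isChain_pair.2 h⟩

theorem append (h₁ : IsRun T A B L₁) (h₂ : IsRun T B C L₂) : IsRun T A C (L₁ ++ L₂.tail) := by
  obtain ⟨hA, hB, hc₁⟩ := h₁
  obtain ⟨t, rfl⟩ : ∃ t, L₂ = B :: t := by
    obtain ⟨_, _, _⟩ := h₂
    cases L₂ <;> simp_all
  obtain ⟨-, hC, hc₂⟩ := h₂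
  refine ⟨?_, ?_, hc₁.append (List.isChain_cons.1 hc₂).2 ?_⟩
  · cases L₁ <;> simp_all
  · cases t <;> simp_all [List.getLast?_append]
  · simp only [hB, Option.mem_def, Option.some.injEq, forall_eq']
    exact fun y hy => (List.isChain_cons.1 hc₂).1 y hy

theorem reverse (h : IsRun T A B L) : IsRun T B A L.reverse := by
  obtain ⟨hA, hB, hc⟩ := h
  exact ⟨by rwa [List.head?_reverse], by rwa [List.getLast?_reverse],
    List.isChain_reverse.2 (hc.imp fun _ _ => PebStep.symm)⟩

theorem map_insert {r : V} (h : IsRun T A B L) (hr : ∀ R ∈ L, r ∉ R) :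
    IsRun T (insert r A) (insert r B) (L.map (insert r)) := by
  obtain ⟨hA, hB, hc⟩ := h
  refine ⟨by simp [hA], by simp [hB], (List.isChain_map _).2 ?_⟩
  exact hc.imp_of_mem_imp fun P Q hP hQ h => h.insert (hr P hP) (hr Q hQ)

end IsRun

def HasRun (T : PebSys V) (W : Finset V) (r : V) (P : Finset V) (b ℓ : ℕ) : Prop :=
  ∃ L, IsRun T P (insert r P) L ∧ (∀ R ∈ L, R ⊆ W ∪ P ∧ R.card ≤ P.card + b) ∧ L.length ≤ ℓ

namespace HasRun

variable {W W₁ W₂ P : Finset V} {r s : V} {b b₁ b₂ ℓ ℓ₁ ℓ₂ : ℕ}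

theorem mono {b' ℓ' : ℕ} (h : HasRun T W r P b ℓ) (hb : b ≤ b') (hℓ : ℓ ≤ ℓ') :
    HasRun T W r P b' ℓ' := by
  obtain ⟨L, hL, hR, hlen⟩ := h
  exact ⟨L, hL, fun R hR' => ⟨(hR R hR').1, (hR R hR').2.trans (by omega)⟩, hlen.trans hℓ⟩

theorem glue (h₁ : HasRun T W₁ s P b₁ ℓ₁) (h₂ : HasRun T W₂ r (insert s P) b₂ ℓ₂)
    (hW₁ : W₁ ⊆ W) (hW₂ : W₂ ⊆ W) (hs : s ∈ W) (hr : r ∈ W) (hrW₁ : r ∉ W₁) (hrP : r ∉ P) :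
    HasRun T W r P (max b₁ b₂ + 1) (2 * ℓ₁ + ℓ₂ - 2) := by
  obtain ⟨L₁, hL₁, hR₁, hℓ₁⟩ := h₁
  obtain ⟨L₂, hL₂, hR₂, hℓ₂⟩ := h₂
  have hr₁ : ∀ R ∈ L₁, r ∉ R := fun R hR hrR => by
    rcases Finset.mem_union.1 ((hR₁ R hR).1 hrR) with h | h
    exacts [hrW₁ h, hrP h]
  have hL₃ := hL₁.reverse.map_insert (r := r) (by simpa using hr₁)
  refine ⟨L₁ ++ L₂.tail ++ (L₁.reverse.map (insert r)).tail, (hL₁.append hL₂).append hL₃, ?_, ?_⟩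
  · intro R hR
    simp only [List.mem_append] at hR
    rcases hR with (hR | hR) | hR
    · obtain ⟨hRW, hRc⟩ := hR₁ R hR
      exact ⟨hRW.trans (Finset.union_subset_union_left hW₁), by omega⟩
    · obtain ⟨hRW, hRc⟩ := hR₂ R (List.mem_of_mem_tail hR)
      refine ⟨hRW.trans ?_, ?_⟩
      · rw [Finset.union_insert]
        exact Finset.insert_subset (Finset.mem_union_left _ hs)
          (Finset.union_subset_union_left hW₂)
      · have := Finset.card_insert_le s P
        omega
    · obtain ⟨R₁, hR₁', rfl⟩ := List.mem_map.1 (List.mem_of_mem_tail hR)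
      obtain ⟨hRW, hRc⟩ := hR₁ R₁ (List.mem_reverse.1 hR₁')
      refine ⟨Finset.insert_subset (Finset.mem_union_left _ hr)
        (hRW.trans (Finset.union_subset_union_left hW₁)), ?_⟩
      have := Finset.card_insert_le r R₁
      omega
  · have := List.length_pos_iff.2 hL₁.ne_nil
    have := List.length_pos_iff.2 hL₂.ne_nil
    simp only [List.length_append, List.length_tail, List.length_map, List.length_reverse]
    omega

end HasRun

theorem IsBranch.hasRun_of_card_le_one {W P : Finset V} {r : V} (hB : IsBranch T W r P)
    (hW : W.card ≤ 1) : HasRun T W r P 1 2 := by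
  have hrP : r ∉ P := Finset.disjoint_left.1 hB.disjoint hB.top_mem
  refine ⟨[P, insert r P], IsRun.pair ⟨r, Or.inl ⟨hrP, rfl⟩, fun u hu hp => ?_⟩, ?_, le_rfl⟩
  · exact (hB.child_mem r hB.top_mem u hu hp).resolve_left
      fun huW => hu (Finset.card_le_one.1 hW u huW r hB.top_mem)
  · simp only [List.mem_cons, List.not_mem_nil, or_false]
    rintro R (rfl | rfl)
    · exact ⟨Finset.subset_union_right, by omega⟩
    · exact ⟨Finset.insert_subset (Finset.mem_union_left _ hB.top_mem) Finset.subset_union_right,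
        Finset.card_insert_le _ _⟩

end Runs

variable [Fintype V]

namespace IsBranch

variable {W P : Finset V} {r s : V}

theorem univ (htree : IsRDTree T) : IsBranch T Finset.univ T.root ∅ where
  top_mem := Finset.mem_univ _
  parent_mem _ _ _ := Finset.mem_univ _
  reaches v _ := htree.2 v
  child_mem _ _ u _ _ := Or.inl (Finset.mem_univ u)
  disjoint := Finset.disjoint_empty_right _

theorem mem_of_reaches (htree : IsRDTree T) (hB : IsBranch T W r P) {u v : V} (hv : v ∈ W)
    (hvu : T.Reaches v u) (hur : T.Reaches u r) : u ∈ W := by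
  obtain ⟨j, hj⟩ := hvu
  induction j generalizing v with
  | zero => exact hj ▸ hv
  | succ j ih =>
    by_cases hvr : v = r
    · subst hvr
      rwa [Reaches.antisymm htree hur ⟨j + 1, hj⟩]
    · exact ih (hB.parent_mem v hv hvr) hj

theorem top_not_mem_below (htree : IsRDTree T) (hB : IsBranch T W r P) (hs : s ∈ W)
    (hsr : s ≠ r) : r ∉ T.below W s :=
  fun h => hsr (Reaches.antisymm htree (hB.reaches s hs) (mem_below.1 h).2)

theorem below (htree : IsRDTree T) (hB : IsBranch T W r P) (hs : s ∈ W) (hsr : s ≠ r) :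
    IsBranch T (T.below W s) s P where
  top_mem := mem_below.2 ⟨hs, Reaches.refl s⟩
  parent_mem v hv hvs := by
    obtain ⟨hvW, hvs'⟩ := mem_below.1 hv
    have hvr : v ≠ r := fun h => hB.top_not_mem_below htree hs hsr (h ▸ hv)
    exact mem_below.2 ⟨hB.parent_mem v hvW hvr, hvs'.parent hvs⟩
  reaches v hv := (mem_below.1 hv).2
  child_mem v hv u huv hu := by
    obtain ⟨hvW, hvs⟩ := mem_below.1 hv
    refine (hB.child_mem v hvW u huv hu).imp_left fun huW => mem_below.2 ⟨huW, ?_⟩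
    exact (Reaches.of_parent_eq hu).trans hvs
  disjoint := hB.disjoint.mono_left (T.below_subset W s)

end IsBranch

variable [DecidableEq V]

def children (T : PebSys V) (v : V) : Finset V :=
  Finset.univ.filter fun u => u ≠ v ∧ T.parent u = v

theorem card_children_le_ncard_neighborSet (v : V) :
    (T.children v).card ≤ ((undirG T).neighborSet v).ncard := by
  rw [← Set.ncard_coe_finset]
  refine Set.ncard_le_ncard (fun u hu => ?_) (Set.toFinite _)
  simp only [children, Finset.coe_filter, Finset.mem_univ, true_and] at hu
  simp only [SimpleGraph.mem_neighborSet, undirG, SimpleGraph.fromRel_adj]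
  exact ⟨hu.1.symm, Or.inr hu.2⟩

theorem below_subset_insert_biUnion (W : Finset V) (s : V) :
    T.below W s ⊆ insert s ((T.children s).biUnion (T.below W)) := by
  intro v hv
  obtain ⟨hvW, hvs⟩ := mem_below.1 hv
  by_cases h : v = s
  · exact h ▸ Finset.mem_insert_self _ _
  obtain ⟨u, hus, hu, hvu⟩ := hvs.exists_child h
  exact Finset.mem_insert_of_mem (Finset.mem_biUnion.2
    ⟨u, by simp [children, hus, hu], mem_below.2 ⟨hvW, hvu⟩⟩)

theorem card_below_le {W : Finset V} {s : V} {d θ : ℕ} (hdeg : (T.children s).card ≤ d)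
    (hsmall : ∀ u ∈ T.children s, (T.below W u).card ≤ θ) :
    (T.below W s).card ≤ d * θ + 1 :=
  calc (T.below W s).card
      ≤ ((T.children s).biUnion (T.below W)).card + 1 :=
        (Finset.card_le_card (below_subset_insert_biUnion W s)).trans (Finset.card_insert_le _ _)
    _ ≤ (T.children s).card * θ + 1 := by
        gcongr; exact Finset.card_biUnion_le_card_mul _ _ _ hsmall
    _ ≤ d * θ + 1 := by gcongr

namespace IsBranch

variable {W P : Finset V} {r s : V}

theorem sdiff_below (htree : IsRDTree T) (hB : IsBranch T W r P) (hs : s ∈ W) (hsr : s ≠ r) :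
    IsBranch T (W \ T.below W s) r (insert s P) where
  top_mem := Finset.mem_sdiff.2 ⟨hB.top_mem, hB.top_not_mem_below htree hs hsr⟩
  parent_mem v hv hvr := by
    obtain ⟨hvW, hvs⟩ := Finset.mem_sdiff.1 hv
    refine Finset.mem_sdiff.2 ⟨hB.parent_mem v hvW hvr, fun h => hvs ?_⟩
    exact mem_below.2 ⟨hvW, (Reaches.of_parent_eq rfl).trans (mem_below.1 h).2⟩
  reaches v hv := hB.reaches v (Finset.mem_sdiff.1 hv).1
  child_mem v hv u huv hu := by
    obtain ⟨hvW, hvs⟩ := Finset.mem_sdiff.1 hv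
    rcases hB.child_mem v hvW u huv hu with huW | huP
    · by_cases hus : u = s
      · exact Or.inr (hus ▸ Finset.mem_insert_self _ _)
      by_cases hub : u ∈ T.below W s
      · exact absurd (mem_below.2 ⟨hvW, hu ▸ (mem_below.1 hub).2.parent hus⟩) hvs
      · exact Or.inl (Finset.mem_sdiff.2 ⟨huW, hub⟩)
    · exact Or.inr (Finset.mem_insert_of_mem huP)
  disjoint := by
    rw [Finset.disjoint_insert_right]
    exact ⟨fun h => (Finset.mem_sdiff.1 h).2 (mem_below.2 ⟨hs, Reaches.refl s⟩),
      hB.disjoint.mono_left Finset.sdiff_subset⟩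

/-- Among the vertices whose part below has more than `θ` elements, take one where it is
smallest: the parts below its children then have at most `θ` elements each. -/
theorem exists_separator (htree : IsRDTree T) (hB : IsBranch T W r P) {d θ : ℕ}
    (hdeg : ∀ v, (T.children v).card ≤ d) (hθ : θ < W.card) (hW : d * θ + 1 < W.card) :
    ∃ s ∈ W, s ≠ r ∧ θ < (T.below W s).card ∧ (T.below W s).card ≤ d * θ + 1 := by
  set A := W.filter fun v => θ < (T.below W v).card
  have hrA : r ∈ A := Finset.mem_filter.2 ⟨hB.top_mem, by rwa [hB.below_top]⟩
  obtain ⟨s, hsA, hmin⟩ := A.exists_min_image (fun v => (T.below W v).card) ⟨r, hrA⟩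
  obtain ⟨hs, hθs⟩ := Finset.mem_filter.1 hsA
  have hsmall : ∀ u ∈ T.children s, (T.below W u).card ≤ θ := by
    intro u hu
    obtain ⟨hus, hpu⟩ := (Finset.mem_filter.1 hu).2
    by_contra! hθu
    obtain ⟨v, hv⟩ := Finset.card_pos.1 (lt_of_le_of_lt (Nat.zero_le θ) hθu)
    have huW : u ∈ W := hB.mem_of_reaches htree (T.below_subset W u hv) (mem_below.1 hv).2
      ((Reaches.of_parent_eq hpu).trans (hB.reaches s hs))
    have hsub : T.below W u ⊂ T.below W s := by
      refine Finset.ssubset_iff_of_subset (fun x hx => ?_) |>.2 ⟨s, ?_, ?_⟩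
      · exact mem_below.2 ⟨(mem_below.1 hx).1, (mem_below.1 hx).2.trans (.of_parent_eq hpu)⟩
      · exact mem_below.2 ⟨hs, Reaches.refl s⟩
      · exact fun h => hus (Reaches.antisymm htree (.of_parent_eq hpu) (mem_below.1 h).2)
    exact (Finset.card_lt_card hsub).not_ge (hmin u (Finset.mem_filter.2 ⟨huW, hθu⟩))
  have hle := card_below_le (hdeg s) hsmall
  refine ⟨s, hs, ?_, hθs, hle⟩
  rintro rfl
  rw [hB.below_top] at hle
  omega

theorem hasRun_split (htree : IsRDTree T) (hB : IsBranch T W r P) (hs : s ∈ W) (hsr : s ≠ r)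
    {b₁ b₂ ℓ₁ ℓ₂ : ℕ} (h₁ : HasRun T (T.below W s) s P b₁ ℓ₁)
    (h₂ : HasRun T (W \ T.below W s) r (insert s P) b₂ ℓ₂) :
    HasRun T W r P (max b₁ b₂ + 1) (2 * ℓ₁ + ℓ₂ - 2) :=
  h₁.glue h₂ (T.below_subset W s) Finset.sdiff_subset hs hB.top_mem
    (hB.top_not_mem_below htree hs hsr) (Finset.disjoint_left.1 hB.disjoint hB.top_mem)

theorem hasRun_card (htree : IsRDTree T) {d : ℕ} (hdeg : ∀ v, (T.children v).card ≤ d)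
    (hB : IsBranch T W r P) : HasRun T W r P W.card (2 * W.card) := by
  induction hn : W.card using Nat.strong_induction_on generalizing W r P with
  | _ n ih =>
  subst hn
  have hr := Finset.card_pos.2 ⟨r, hB.top_mem⟩
  rcases le_or_gt W.card 1 with hW | hW
  · exact (hB.hasRun_of_card_le_one hW).mono (by omega) (by omega)
  obtain ⟨s, hs, hsr, hlo, hhi⟩ :=
    hB.exists_separator htree hdeg (θ := 0) (by omega) (by simpa using hW)
  have hsub := Finset.card_sdiff_of_subset (T.below_subset W s)
  have h₁ := ih _ (by omega) (hB.below htree hs hsr) rfl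
  have h₂ := ih _ (by omega) (hB.sdiff_below htree hs hsr) rfl
  rw [mul_zero, zero_add] at hhi
  refine (hB.hasRun_split htree hs hsr h₁ h₂).mono ?_ ?_ <;> omega

theorem hasRun_level (htree : IsRDTree T) {d m : ℕ} (hdeg : ∀ v, (T.children v).card ≤ d)
    (hd : 0 < d) (hm : 0 < m) (j : ℕ) (hB : IsBranch T W r P) :
    HasRun T W r P ((d * m + 2) * j + W.card / m ^ j) (2 ^ (j + 1) * W.card) := by
  induction j generalizing W r P with
  | zero => simpa using hB.hasRun_card htree hdeg
  | succ j ihj =>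
  induction hn : W.card using Nat.strong_induction_on generalizing W r P with
  | _ n ih =>
  subst hn
  have hpow : 0 < m ^ (j + 1) := pow_pos hm _
  by_cases hW : W.card ≤ d * (m ^ (j + 1) - 1) + 1
  · have hdiv := Nat.div_pow_le_of_le_mul_pow_sub_one hm hW
    refine (ihj hB).mono ?_ (by gcongr <;> omega)
    linarith [Nat.zero_le (W.card / m ^ (j + 1))]
  rw [not_le] at hW
  have hθ : m ^ (j + 1) - 1 < W.card :=
    lt_of_le_of_lt (Nat.le_mul_of_pos_left _ hd) (by omega)
  obtain ⟨s, hs, hsr, hlo, hhi⟩ := hB.exists_separator htree hdeg hθ hW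
  obtain ⟨e, he⟩ := Nat.exists_eq_add_of_le (Finset.card_le_card (T.below_subset W s))
  have hsub : (W \ T.below W s).card = e := by
    rw [Finset.card_sdiff_of_subset (T.below_subset W s)]
    omega
  have h₁ := ihj (hB.below htree hs hsr)
  have h₂ := ih _ (by omega) (hB.sdiff_below htree hs hsr) rfl
  rw [hsub] at h₂
  refine (hB.hasRun_split htree hs hsr h₁ h₂).mono ?_ ?_
  · have hdiv₁ := Nat.div_pow_le_of_le_mul_pow_sub_one hm hhi
    have hdiv₂ := Nat.div_add_one_le_div_of_add_le hpow (a := W.card) (b := e) (by omega)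
    rw [Nat.add_one_le_iff, max_lt_iff]
    constructor <;> linarith [Nat.zero_le (W.card / m ^ (j + 1))]
  · rw [he]
    exact (Nat.sub_le _ _).trans (le_of_eq (by ring))

end IsBranch

theorem exists_isPebbling_of_card_le_pow (htree : IsRDTree T)
    {d m j : ℕ} (hdeg : ∀ v, (T.children v).card ≤ d) (hd : 0 < d) (hm : 0 < m)
    (hn : Fintype.card V ≤ m ^ (j + 1)) :
    ∃ L, IsPebbling T L ∧ pebSpace L ≤ (d + 2) * (j + 1) * m ∧
      L.length ≤ 2 ^ (j + 1) * Fintype.card V := by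
  obtain ⟨L, hL, hR, hlen⟩ := (IsBranch.univ htree).hasRun_level htree hdeg hd hm j
  rw [Finset.card_univ] at hR hlen
  have hdiv : Fintype.card V / m ^ j ≤ m := Nat.div_le_of_le_mul (by rwa [← pow_succ])
  refine ⟨L, ⟨hL.1, by simpa using hL.2.1, hL.2.2⟩,
    pebSpace_le fun R hR' => (hR R hR').2.trans ?_, hlen⟩
  rw [Finset.card_empty, zero_add]
  nlinarith

end PebSys

theorem exists_le_pow_and_le_two_mul_rpow {n k : ℕ} (hn : 0 < n) (hk : 0 < k) :
    ∃ m : ℕ, 0 < m ∧ n ≤ m ^ k ∧ (m : ℝ) ≤ 2 * (n : ℝ) ^ (1 / (k : ℝ)) := by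
  set x : ℝ := (n : ℝ) ^ (1 / (k : ℝ))
  have hx : 1 ≤ x := Real.one_le_rpow (by exact_mod_cast hn) (by positivity)
  refine ⟨⌈x⌉₊, Nat.ceil_pos.2 (by linarith), ?_, ?_⟩
  · have hxk : (n : ℝ) = x ^ k := by
      rw [← Real.rpow_natCast, ← Real.rpow_mul (by positivity), one_div_mul_cancel (by positivity),
        Real.rpow_one]
    exact_mod_cast hxk.le.trans (pow_le_pow_left₀ (by linarith) (Nat.le_ceil x) k)
  · linarith [Nat.ceil_lt_add_one (by linarith : 0 ≤ x)]

/-- For all positive integers `k` and `d` there is a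
constant `C > 0` such that every rooted directed tree on `n` vertices whose
underlying undirected tree has maximum degree at most `d` admits a reversible
pebbling using at most `C · n ^ (1/k)` pebbles and at most `C · n` steps. -/
theorem bounded_degree_tree_time_space_tradeoff (k d : ℕ) (hk : 0 < k) (hd : 0 < d) :
    ∃ C : ℝ, 0 < C ∧
      ∀ (V : Type) [Fintype V] [DecidableEq V] (T : PebSys V),
        IsRDTree T →
        (∀ v : V, ((undirG T).neighborSet v).ncard ≤ d) →
        ∃ L : List (Finset V), IsPebbling T L ∧
          (pebSpace L : ℝ) ≤ C * (Fintype.card V : ℝ) ^ (1 / (k : ℝ)) ∧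
          (L.length : ℝ) ≤ C * (Fintype.card V : ℝ) := by
  obtain ⟨j, rfl⟩ := Nat.exists_eq_add_one_of_ne_zero hk.ne'
  refine ⟨2 * (d + 2) * (j + 1) + 2 ^ (j + 1), by positivity, fun V _ _ T htree hdeg => ?_⟩
  obtain ⟨m, hm, hnm, hmx⟩ :=
    exists_le_pow_and_le_two_mul_rpow (Fintype.card_pos_iff.2 ⟨T.root⟩) hk
  obtain ⟨L, hL, hspace, hlen⟩ := PebSys.exists_isPebbling_of_card_le_pow htree
    (fun v => (PebSys.card_children_le_ncard_neighborSet v).trans (hdeg v)) hd hm hnm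
  refine ⟨L, hL, ?_, ?_⟩
  · calc (pebSpace L : ℝ) ≤ (d + 2) * (j + 1) * m := by exact_mod_cast hspace
      _ ≤ (d + 2) * (j + 1) * (2 * (Fintype.card V : ℝ) ^ (1 / ((j + 1 : ℕ) : ℝ))) := by gcongr
      _ ≤ _ := by
        rw [← mul_assoc]
        gcongr
        nlinarith [pow_pos (two_pos (α := ℝ)) (j + 1)]
  · calc (L.length : ℝ) ≤ 2 ^ (j + 1) * Fintype.card V := by exact_mod_cast hlen
      _ ≤ _ := by gcongr; nlinarith
end

section
/- Every finite undirected tree T' with n' vertices can be divided into two subtrees by removing a single edge such that, if Δ is the maximum degree of T', the larger of the two resulting subtrees has at least ⌊n'/2⌋ and at most ⌈n' · Δ/(Δ + 1)⌉ vertices; consequently, for every positive real m, any tree T' with maximum degree Δ and more than m vertices contains a subtree T'' (a connected subgraph obtained by iterating this splitting and keeping the larger part) whose number of vertices is at least ⌊m/2⌋ and at most ⌈m⌉. -/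
/-!
Choose the edge `ab` of the tree whose removal makes the larger side as small as possible, and
orient it so that the side `A` of `a` is the larger one, `|A| = L`. Every other neighbour `c` of
`a` roots a branch contained in `A \ {a}`, hence of size `< L`; by minimality, cutting `ac` must
then leave at least `L` vertices on the side of `a`, so the branch at `c` has at most `n - L`
vertices. As `A` is `a` together with at most `Δ - 1` such branches, `L ≤ 1 + (Δ - 1)(n - L)`,
which together with `L < n` gives `L (Δ + 1) ≤ n Δ`.

For the second part, a connected vertex set can be grown one vertex at a time along an edge
leaving it, so a connected graph has connected induced subgraphs of every size up to `n`, in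
particular of size `⌈m⌉`.
-/

namespace SimpleGraph

variable {V : Type*} {G : SimpleGraph V} {a b c : V}

def side (G : SimpleGraph V) (e : Sym2 V) (x : V) : Set V :=
  {v | (G.deleteEdges {e}).Reachable x v}

lemma self_mem_side (e : Sym2 V) (x : V) : x ∈ G.side e x :=
  Reachable.refl x

lemma side_comm : G.side s(b, a) = G.side s(a, b) := by
  rw [Sym2.eq_swap]

lemma Preconnected.exists_adj_mem_notMem (hG : G.Preconnected) {S : Set V} {u v : V}
    (hu : u ∈ S) (hv : v ∉ S) : ∃ x y, G.Adj x y ∧ x ∈ S ∧ y ∉ S := by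
  obtain ⟨d, -, hd⟩ := (hG u v).some.exists_boundary_dart S hu hv
  exact ⟨d.fst, d.snd, d.adj, hd⟩

lemma Preconnected.side_union_side (hG : G.Preconnected) (a b : V) :
    G.side s(a, b) a ∪ G.side s(a, b) b = Set.univ := by
  refine Set.eq_univ_of_forall fun v => by_contra fun hv => ?_
  obtain ⟨x, y, hxy, hx, hy⟩ :=
    hG.exists_adj_mem_notMem (Set.mem_union_left _ (G.self_mem_side s(a, b) a)) hv
  by_cases hexy : s(x, y) = s(a, b)
  · rcases Sym2.eq_iff.1 hexy with ⟨-, rfl⟩ | ⟨-, rfl⟩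
    · exact hy (Set.mem_union_right _ (G.self_mem_side _ _))
    · exact hy (Set.mem_union_left _ (G.self_mem_side _ _))
  · have hxy' : (G.deleteEdges {s(a, b)}).Adj x y := by simpa [hxy] using hexy
    rcases hx with hx | hx
    · exact hy (Set.mem_union_left _ (hx.trans hxy'.reachable))
    · exact hy (Set.mem_union_right _ (hx.trans hxy'.reachable))

lemma IsBridge.disjoint_side (h : G.IsBridge s(a, b)) :
    Disjoint (G.side s(a, b) a) (G.side s(a, b) b) :=
  Set.disjoint_left.2 fun _ ha hb => h (ha.trans hb.symm)

lemma IsTree.isBridge (hT : G.IsTree) (hab : G.Adj a b) : G.IsBridge s(a, b) :=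
  isAcyclic_iff_forall_adj_isBridge.1 hT.isAcyclic hab

lemma IsTree.ncard_side_add_ncard_side [Finite V] (hT : G.IsTree) (hab : G.Adj a b) :
    (G.side s(a, b) a).ncard + (G.side s(a, b) b).ncard = Nat.card V := by
  rw [← Set.ncard_union_eq (hT.isBridge hab).disjoint_side,
    hT.connected.preconnected.side_union_side, Set.ncard_univ]

lemma IsBridge.notMem_side (hac : G.IsBridge s(a, c)) : a ∉ G.side s(a, c) c :=
  fun h => hac h.symm

lemma IsBridge.side_subset_side (hac : G.IsBridge s(a, c)) (hadj : G.Adj a c) (hcb : c ≠ b) :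
    G.side s(a, c) c ⊆ G.side s(a, b) a := by
  classical
  intro v hv
  obtain ⟨p, hp⟩ := reachable_deleteEdges_iff_exists_walk.1 hv
  -- a walk from `c` through `ab` would reach `a` without using the bridge `ac`
  have hpab : s(a, b) ∉ p.edges := fun h => by
    have ha := p.fst_mem_support_of_mem_edges h
    refine hac.notMem_side (reachable_deleteEdges_iff_exists_walk.2
      ⟨p.takeUntil a ha, fun h' => hp (p.edges_takeUntil_subset_edges ha h')⟩)
  have hac' : (G.deleteEdges {s(a, b)}).Adj a c := by simp [hadj, hcb, hadj.ne']
  exact hac'.reachable.trans (reachable_deleteEdges_iff_exists_walk.2 ⟨p, hpab⟩)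

lemma side_subset_insert_biUnion [DecidableEq V] [Fintype (G.neighborSet a)] :
    G.side s(a, b) a ⊆ insert a (⋃ c ∈ (G.neighborFinset a).erase b, G.side s(a, c) c) := by
  intro v hv
  obtain ⟨q, hq⟩ : ∃ q : (G.deleteEdges {s(a, b)}).Walk a v, q.IsPath :=
    ⟨hv.some.bypass, Walk.bypass_isPath _⟩
  cases q with
  | nil => exact Set.mem_insert _ _
  | @cons _ c _ h q =>
    obtain ⟨hac, hne⟩ := deleteEdges_adj.1 h
    have hcb : c ≠ b := by rintro rfl; exact hne rfl
    have ha : a ∉ q.support := ((Walk.cons_isPath_iff _ _).1 hq).2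
    refine Set.mem_insert_of_mem _ (Set.mem_biUnion (by simp [hac, hcb]) ⟨q.transfer _ ?_⟩)
    intro e he
    rw [edgeSet_deleteEdges]
    refine ⟨edgeSet_mono (G.deleteEdges_le _) (q.edges_subset_edgeSet he), ?_⟩
    rintro rfl
    exact ha (q.fst_mem_support_of_mem_edges he)

lemma ncard_side_le_one_add_sum [Finite V] [DecidableEq V] [Fintype (G.neighborSet a)] :
    (G.side s(a, b) a).ncard ≤ 1 + ∑ c ∈ (G.neighborFinset a).erase b, (G.side s(a, c) c).ncard :=
  calc (G.side s(a, b) a).ncard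
      ≤ (insert a (⋃ c ∈ (G.neighborFinset a).erase b, G.side s(a, c) c)).ncard :=
        Set.ncard_le_ncard side_subset_insert_biUnion
    _ ≤ (⋃ c ∈ (G.neighborFinset a).erase b, G.side s(a, c) c).ncard + 1 :=
        Set.ncard_insert_le _ _
    _ ≤ 1 + ∑ c ∈ (G.neighborFinset a).erase b, (G.side s(a, c) c).ncard := by
        have := ((G.neighborFinset a).erase b).set_ncard_biUnion_le fun c => G.side s(a, c) c
        omega

lemma IsTree.ncard_side_add_ncard_side_le [Finite V] (hT : G.IsTree) (hac : G.Adj a c)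
    (hcb : c ≠ b)
    (hmin : (G.side s(a, b) a).ncard ≤
      max (G.side s(a, c) a).ncard (G.side s(a, c) c).ncard) :
    (G.side s(a, c) c).ncard + (G.side s(a, b) a).ncard ≤ Nat.card V := by
  have hbridge := hT.isBridge hac
  have hlt : (G.side s(a, c) c).ncard < (G.side s(a, b) a).ncard :=
    Set.ncard_lt_ncard <| (Set.ssubset_iff_of_subset (hbridge.side_subset_side hac hcb)).2
      ⟨a, G.self_mem_side _ a, hbridge.notMem_side⟩
  have := hT.ncard_side_add_ncard_side hac
  omega

lemma mul_succ_le_mul_of_le_one_add_mul {L n d D : ℕ} (h : L ≤ 1 + d * (n - L)) (hLn : L < n)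
    (hdD : d + 1 ≤ D) : L * (D + 1) ≤ n * D := by
  obtain ⟨k, rfl⟩ := Nat.exists_eq_add_of_lt hLn
  rw [show L + k + 1 - L = k + 1 by omega] at h
  nlinarith

lemma IsTree.ncard_side_mul_le [Fintype V] [DecidableRel G.Adj] (hT : G.IsTree)
    (hab : G.Adj a b)
    (hmin : ∀ c, G.Adj a c → c ≠ b → (G.side s(a, b) a).ncard ≤
      max (G.side s(a, c) a).ncard (G.side s(a, c) c).ncard) :
    (G.side s(a, b) a).ncard * (G.maxDegree + 1) ≤ Nat.card V * G.maxDegree := by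
  classical
  have hbranch : ∀ c ∈ (G.neighborFinset a).erase b,
      (G.side s(a, c) c).ncard ≤ Nat.card V - (G.side s(a, b) a).ncard := fun c hc => by
    obtain ⟨hcb, hac⟩ : c ≠ b ∧ G.Adj a c := by simpa using hc
    have := hT.ncard_side_add_ncard_side_le hac hcb (hmin c hac hcb)
    omega
  have hcount := (ncard_side_le_one_add_sum (G := G) (a := a) (b := b)).trans
    (Nat.add_le_add_left (Finset.sum_le_card_nsmul _ _ _ hbranch) 1)
  have hdeg : ((G.neighborFinset a).erase b).card + 1 ≤ G.maxDegree := by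
    rw [Finset.card_erase_of_mem (by simpa using hab), card_neighborFinset_eq_degree]
    have := G.degree_le_maxDegree a
    have := G.degree_pos_iff_exists_adj a |>.2 ⟨b, hab⟩
    omega
  have hlt : (G.side s(a, b) a).ncard < Nat.card V := by
    have := hT.ncard_side_add_ncard_side hab
    have := (Set.ncard_pos (Set.toFinite _)).2 ⟨b, G.self_mem_side s(a, b) b⟩
    omega
  exact mul_succ_le_mul_of_le_one_add_mul hcount hlt hdeg

lemma exists_adj_forall_ncard_side_le_max [Finite V] {u w : V} (huw : G.Adj u w) :
    ∃ a b, G.Adj a b ∧ (G.side s(a, b) b).ncard ≤ (G.side s(a, b) a).ncard ∧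
      ∀ x y, G.Adj x y → (G.side s(a, b) a).ncard ≤
        max (G.side s(x, y) x).ncard (G.side s(x, y) y).ncard := by
  obtain ⟨⟨a, b⟩, hab, hmin⟩ := Set.exists_min_image {p : V × V | G.Adj p.1 p.2}
    (fun p => max (G.side s(p.1, p.2) p.1).ncard (G.side s(p.1, p.2) p.2).ncard)
    (Set.toFinite _) ⟨(u, w), huw⟩
  have hmin' : ∀ x y, G.Adj x y → max (G.side s(a, b) a).ncard (G.side s(a, b) b).ncard ≤
      max (G.side s(x, y) x).ncard (G.side s(x, y) y).ncard := fun x y hxy => hmin (x, y) hxy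
  rcases le_total (G.side s(a, b) b).ncard (G.side s(a, b) a).ncard with hba | hab'
  · exact ⟨a, b, hab, hba, fun x y hxy => (le_max_left _ _).trans (hmin' x y hxy)⟩
  · refine ⟨b, a, G.adj_symm hab, ?_, fun x y hxy => ?_⟩ <;> rw [side_comm]
    exacts [hab', (le_max_right _ _).trans (hmin' x y hxy)]

lemma Connected.exists_connected_induce_ncard_eq [Finite V] (hG : G.Connected) {k : ℕ}
    (hk : 1 ≤ k) (hkV : k ≤ Nat.card V) :
    ∃ S : Set V, (G.induce S).Connected ∧ S.ncard = k := by
  induction k, hk using Nat.le_induction with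
  | base =>
    obtain ⟨v⟩ := hG.nonempty
    exact ⟨{v}, ⟨Preconnected.of_subsingleton⟩, Set.ncard_singleton v⟩
  | succ k hk ih =>
    obtain ⟨S, hS, rfl⟩ := ih (by omega)
    obtain ⟨u, hu⟩ := Set.nonempty_of_ncard_ne_zero (by omega : S.ncard ≠ 0)
    obtain ⟨w, hw⟩ : ∃ w, w ∉ S := by
      by_contra! hSV
      rw [Set.eq_univ_of_forall hSV, Set.ncard_univ] at hkV
      omega
    obtain ⟨x, y, hxy, hx, hy⟩ := hG.preconnected.exists_adj_mem_notMem hu hw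
    refine ⟨S ∪ {y}, connected_induce_union hS.preconnected
      (by simp [Preconnected.of_subsingleton]) hx rfl hxy, ?_⟩
    rw [Set.union_singleton, Set.ncard_insert_of_notMem hy]

end SimpleGraph

open SimpleGraph

/-- Every finite undirected tree on at least two vertices
can be split into two subtrees by removing a single edge so that the larger
side has at least `⌊n'/2⌋` and at most `⌈n' · Δ/(Δ + 1)⌉` vertices (where
`n'` is the number of vertices and `Δ` the maximum degree); consequently, for
every positive real `m`, any tree with maximum degree `Δ` and more than `m`
vertices contains a subtree (connected subgraph) with at least `⌊m/2⌋` and at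
most `⌈m⌉` vertices. -/
theorem tree_edge_separator_and_subtree :
    (∀ (V : Type) [Fintype V] (G : SimpleGraph V) [DecidableRel G.Adj],
      G.IsTree → 2 ≤ Fintype.card V →
      ∃ a b : V, G.Adj a b ∧
        Fintype.card V / 2 ≤
          max {v | (G.deleteEdges {s(a, b)}).Reachable a v}.ncard
              {v | (G.deleteEdges {s(a, b)}).Reachable b v}.ncard ∧
        max {v | (G.deleteEdges {s(a, b)}).Reachable a v}.ncard
            {v | (G.deleteEdges {s(a, b)}).Reachable b v}.ncard ≤
          ⌈((Fintype.card V : ℚ) * G.maxDegree) / (G.maxDegree + 1)⌉₊) ∧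
    (∀ (V : Type) [Fintype V] (G : SimpleGraph V),
      G.IsTree → ∀ m : ℝ, 0 < m → m < Fintype.card V →
      ∃ S : Set V, (G.induce S).Connected ∧
        ⌊m / 2⌋₊ ≤ S.ncard ∧ S.ncard ≤ ⌈m⌉₊) := by
  refine ⟨fun V _ G _ hT hcard => ?_, fun V _ G hT m hm hmn => ?_⟩
  · have : Nontrivial V := Fintype.one_lt_card_iff_nontrivial.1 hcard
    obtain ⟨v⟩ := hT.connected.nonempty
    obtain ⟨w, hvw⟩ := hT.connected.preconnected.exists_adj_of_nontrivial v
    obtain ⟨a, b, hab, hba, hmin⟩ := exists_adj_forall_ncard_side_le_max hvw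
    have hsum := hT.ncard_side_add_ncard_side hab
    have hmul := hT.ncard_side_mul_le hab fun c hac _ => hmin a c hac
    rw [Nat.card_eq_fintype_card] at hsum hmul
    refine ⟨a, b, hab, ?_⟩
    change _ ≤ max (G.side _ a).ncard (G.side _ b).ncard ∧
      max (G.side _ a).ncard (G.side _ b).ncard ≤ _
    rw [max_eq_left hba]
    refine ⟨by omega, Nat.cast_le.1 (le_trans ?_ (Nat.le_ceil _))⟩
    rw [le_div_iff₀ (by positivity)]
    exact_mod_cast hmul
  · obtain ⟨S, hS, hcard⟩ := hT.connected.exists_connected_induce_ncard_eq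
      (Nat.ceil_pos.2 hm) (by simpa using Nat.ceil_le.2 hmn.le)
    refine ⟨S, hS, ?_, hcard.le⟩
    rw [hcard]
    exact (Nat.floor_mono (by linarith)).trans (Nat.floor_le_ceil m)
end
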